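/- arXiv:1111.4963 — 5 statements merged into one kernel-verified Lean document; each statement's English description precedes it below -/
import Mathlib

section
/- Let K be a number field and let α, β be nonzero algebraic integers in the ring of integers O_K. Then the relative height satisfies H_K(α/β) = N(α,β)^{-1} · ∏_{v ∈ M_K^∞} max{|α|_v^{n_v}, |β|_v^{n_v}}, where N(α,β) denotes the absolute norm of the ideal generated by α and β. -/
/-!
By the product formula, `H_K(α/β)` is the Weil height of the projective point `(α : β)`, whose
archimedean part is `∏_v max(|α|_v, |β|_v)^{n_v}`. Since `α` and `β` are integral,
`max(|α|_v, |β|_v) = N(v)^{-ord_v (α, β)}` at every finite place `v`, so the non-archimedean part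
is `N(α, β)⁻¹`.
-/

open NumberField IsDedekindDomain Real
open scoped nonZeroDivisors Classical

variable (K : Type*) [Field K] [NumberField K]

/-- The normalized `v`-adic absolute value `|x|_v^{n_v} = N(v)^{-ord_v(x)}` at a finite place. -/
noncomputable def vadicAbs (v : HeightOneSpectrum (𝓞 K)) (x : K) : ℝ :=
  if hx : v.valuation K x = 0 then 0
  else (Ideal.absNorm v.asIdeal : ℝ) ^ (Multiplicative.toAdd (WithZero.unzero hx))

/-- The relative multiplicative height `H_K(x) = ∏_{v ∈ M_K} max {|x|_v^{n_v}, 1}`. -/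
noncomputable def relHeight (x : K) : ℝ :=
  (∏ w : InfinitePlace K, max (w x ^ w.mult) 1) *
    ∏ᶠ v : HeightOneSpectrum (𝓞 K), max (vadicAbs K v x) 1

theorem max_pow_of_nonneg {M₀ : Type*} [MonoidWithZero M₀] [LinearOrder M₀] [PosMulMono M₀]
    [MulPosMono M₀] {a b : M₀} (ha : 0 ≤ a) (hb : 0 ≤ b) (n : ℕ) :
    max a b ^ n = max (a ^ n) (b ^ n) :=
  pow_left_monotoneOn.map_max ha hb

theorem ciSup_fin_two {α : Type*} [ConditionallyCompleteLattice α] (f : Fin 2 → α) :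
    ⨆ i, f i = max (f 0) (f 1) :=
  eq_of_forall_ge_iff <| by simp [ciSup_le_iff, Fin.forall_fin_two]

section

variable {K}

theorem vadicAbs_eq_finitePlace_mk (v : HeightOneSpectrum (𝓞 K)) (x : K) :
    vadicAbs K v x = FinitePlace.mk v x := by
  rw [FinitePlace.mk_apply, FinitePlace.norm_embedding', vadicAbs]
  split_ifs with h
  · simp [h]
  · simp [WithZeroMulInt.toNNReal_neg_apply _ h]

theorem relHeight_eq_mulHeight₁ (x : K) : relHeight K x = Height.mulHeight₁ x := by
  rw [relHeight, mulHeight₁_eq, ← finprod_comp_equiv FinitePlace.equivHeightOneSpectrum.symm]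
  congr 1
  · refine Finset.prod_congr rfl fun w _ => ?_
    rw [max_pow_of_nonneg (by positivity) zero_le_one, one_pow]
  · simp_rw [vadicAbs_eq_finitePlace_mk]
    rfl

theorem finprod_finitePlace_max_eq_inv_absNorm_span {α β : 𝓞 K} (hβ : β ≠ 0) :
    ∏ᶠ v : FinitePlace K, max (v (α : K)) (v (β : K)) =
      (Ideal.absNorm (Ideal.span {α, β}) : ℝ)⁻¹ := by
  have key := absNorm_mul_finprod_finitePlace_eq_one (x := ![α, β]) (by simp [hβ])
  simp_rw [ciSup_fin_two, Matrix.range_cons, Matrix.range_empty, Set.union_empty,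
    Set.singleton_union] at key
  exact eq_inv_of_mul_eq_one_right key

end

theorem height_eq_inv_norm_mul_prod_max (α β : 𝓞 K) (hβ : β ≠ 0) :
    relHeight K ((α : K) / (β : K)) =
      (Ideal.absNorm (Ideal.span {α, β}) : ℝ)⁻¹ *
        ∏ w : InfinitePlace K, max (w (α : K) ^ w.mult) (w (β : K) ^ w.mult) := by
  rw [relHeight_eq_mulHeight₁, Height.mulHeight₁_div_eq_mulHeight, mulHeight_eq (by simp [hβ])]
  simp_rw [ciSup_fin_two, Matrix.cons_val_zero, Matrix.cons_val_one, Matrix.cons_val_fin_one,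
    max_pow_of_nonneg (apply_nonneg _ _) (apply_nonneg _ _)]
  rw [finprod_finitePlace_max_eq_inv_absNorm_span hβ, mul_comm]
end

section
/- Let K be a number field and γ ∈ K^* with H_K(γ) ≤ B. Write the fractional ideal (γ) = I·J^{-1} with I, J coprime integral ideals, and suppose a is an integral ideal in the inverse ideal class of I (equivalently of J), so that aI = (α) and aJ = (β) are principal with γ = α/β (after scaling α by a unit). Then |N_{K/Q}(α)| ≤ B·N(a) and |N_{K/Q}(β)| ≤ B·N(a), and the ideal generated by α and β equals a. -/
open NumberField IsDedekindDomain Real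
open scoped nonZeroDivisors Classical

variable (K : Type*) [Field K] [NumberField K]

/-! Write `γ = α / β` with `a * I = (α)` and `a * J = (β)`. At a prime `v ∣ J` coprimality gives
`v ∤ I`, so the `v`-adic factor of `H_K(γ)` is exactly `N(v) ^ ord_v(J)`; hence the finite part of
the height is at least `N(J)`. The archimedean part is at least `|N(γ)| = N(I) / N(J)`. So both
`N(I)` and `N(J)` are at most `H_K(γ) ≤ B`, while `|N(α)| = N(a) N(I)` and `|N(β)| = N(a) N(J)`.
Finally `(α, β) = a * I + a * J = a * (I + J) = a`. -/

namespace IsDedekindDomain.HeightOneSpectrum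

variable {R : Type*} [CommRing R] [IsDedekindDomain R] (v : HeightOneSpectrum R)

noncomputable def count (I : Ideal R) : ℕ :=
  (Associates.mk v.asIdeal).count (Associates.mk I).factors

variable {v}

lemma maxPowDividing_eq_pow_count (I : Ideal R) : v.maxPowDividing I = v.asIdeal ^ v.count I :=
  rfl

lemma count_mul {I J : Ideal R} (hI : I ≠ 0) (hJ : J ≠ 0) :
    v.count (I * J) = v.count I + v.count J := by
  rw [count, ← Associates.mk_mul_mk]
  exact Associates.count_mul (Associates.mk_ne_zero.mpr hI) (Associates.mk_ne_zero.mpr hJ)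
    v.associates_irreducible

lemma count_ne_zero_iff_dvd {I : Ideal R} (hI : I ≠ 0) : v.count I ≠ 0 ↔ v.asIdeal ∣ I :=
  Associates.count_ne_zero_iff_dvd hI v.irreducible

lemma count_eq_zero_or_count_eq_zero_of_sup_eq_top {I J : Ideal R} (hI : I ≠ 0) (hJ : J ≠ 0)
    (hIJ : I ⊔ J = ⊤) : v.count I = 0 ∨ v.count J = 0 := by
  by_contra! h
  rw [count_ne_zero_iff_dvd hI, count_ne_zero_iff_dvd hJ] at h
  refine v.isPrime.ne_top (eq_top_iff.mpr ?_)
  rw [← hIJ]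
  exact sup_le (Ideal.le_of_dvd h.1) (Ideal.le_of_dvd h.2)

lemma valuation_div_eq_exp {K : Type*} [Field K] [Algebra R K] [IsFractionRing R K] {x y : R}
    (hx : x ≠ 0) (hy : y ≠ 0) :
    v.valuation K (algebraMap R K x / algebraMap R K y) =
      WithZero.exp ((v.count (Ideal.span {y}) : ℤ) - v.count (Ideal.span {x})) := by
  rw [map_div₀, valuation_of_algebraMap, valuation_of_algebraMap, v.intValuation_if_neg hx,
    v.intValuation_if_neg hy, ← WithZero.exp_sub, neg_sub_neg]
  rfl

end IsDedekindDomain.HeightOneSpectrum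

theorem Ideal.span_pair_eq_of_mul_eq_span {R : Type*} [CommSemiring R] {a I J : Ideal R} {x y : R}
    (hIJ : I ⊔ J = ⊤) (hI : a * I = Ideal.span {x}) (hJ : a * J = Ideal.span {y}) :
    Ideal.span {x, y} = a := by
  rw [Ideal.span_insert, ← hI, ← hJ, ← Ideal.mul_sup, hIJ, Ideal.mul_top]

variable {K}

open Ideal HeightOneSpectrum

lemma one_le_absNorm (v : HeightOneSpectrum (𝓞 K)) : (1 : ℝ) ≤ absNorm v.asIdeal := by
  exact_mod_cast Nat.one_le_iff_ne_zero.mpr (absNorm_eq_zero_iff.not.mpr v.ne_bot)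

lemma vadicAbs_zero (v : HeightOneSpectrum (𝓞 K)) : vadicAbs K v 0 = 0 := by
  simp [vadicAbs]

lemma vadicAbs_eq_zpow {v : HeightOneSpectrum (𝓞 K)} {x : K} {n : ℤ}
    (h : v.valuation K x = WithZero.exp n) : vadicAbs K v x = (absNorm v.asIdeal : ℝ) ^ n := by
  have hx : v.valuation K x ≠ 0 := by simp [h]
  have hn : WithZero.unzero hx = Multiplicative.ofAdd n := by
    rw [← WithZero.coe_inj, WithZero.coe_unzero, h]
    rfl
  rw [vadicAbs, dif_neg hx, hn, toAdd_ofAdd]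

lemma vadicAbs_div (v : HeightOneSpectrum (𝓞 K)) {x y : 𝓞 K} (hx : x ≠ 0) (hy : y ≠ 0) :
    vadicAbs K v (x / y) =
      (absNorm v.asIdeal : ℝ) ^ ((v.count (span {y}) : ℤ) - v.count (span {x})) :=
  vadicAbs_eq_zpow (v.valuation_div_eq_exp hx hy)

lemma hasFiniteMulSupport_max_vadicAbs (x : K) :
    Function.HasFiniteMulSupport fun v : HeightOneSpectrum (𝓞 K) ↦ max (vadicAbs K v x) 1 := by
  obtain ⟨y, z, hz, rfl⟩ := IsFractionRing.div_surjective (𝓞 K) x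
  have hz : z ≠ 0 := nonZeroDivisors.ne_zero hz
  rcases eq_or_ne y 0 with rfl | hy
  · simp [vadicAbs_zero, Function.HasFiniteMulSupport]
  have hz' : span {z} ≠ 0 := span_singleton_eq_bot.not.mpr hz
  refine (finite_factors hz').subset fun v hv ↦ ?_
  by_contra hvz
  refine hv (max_eq_right ?_)
  rw [vadicAbs_div v hy hz, not_not.mp (mt (count_ne_zero_iff_dvd hz').mp hvz)]
  exact zpow_le_one_of_nonpos₀ (one_le_absNorm v) (by simp)

lemma abs_norm_le_prod_max_infinitePlace (x : K) :
    ((|Algebra.norm ℚ x| : ℚ) : ℝ) ≤ ∏ w : InfinitePlace K, max (w x ^ w.mult) 1 := by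
  rw [← InfinitePlace.prod_eq_abs_norm]
  exact Finset.prod_le_prod (fun w _ ↦ by positivity) fun w _ ↦ le_max_left _ _

lemma one_le_prod_max_infinitePlace (x : K) :
    1 ≤ ∏ w : InfinitePlace K, max (w x ^ w.mult) 1 :=
  Finset.one_le_prod fun _ _ ↦ le_max_right _ _

variable {a I J : Ideal (𝓞 K)} {α β : 𝓞 K}

lemma abs_norm_eq_absNorm_mul (h : a * I = span {α}) :
    |Algebra.norm ℚ (α : K)| = absNorm a * absNorm I := by
  rw [← Algebra.coe_norm_int, ← Int.cast_abs, Int.abs_eq_natAbs, ← absNorm_span_singleton, ← h,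
    map_mul, Int.cast_natCast, Nat.cast_mul]

lemma absNorm_eq_abs_norm_div_mul_absNorm (haI : a * I = span {α}) (haJ : a * J = span {β})
    (hβ : β ≠ 0) :
    (absNorm I : ℚ) = |Algebra.norm ℚ ((α : K) / β)| * absNorm J := by
  have ha : (absNorm a : ℚ) ≠ 0 := by
    exact_mod_cast absNorm_eq_zero_iff.not.mpr
      (left_ne_zero_of_mul (haJ ▸ span_singleton_eq_bot.not.mpr hβ))
  refine mul_left_cancel₀ ha ?_
  rw [← abs_norm_eq_absNorm_mul haI, mul_left_comm, ← abs_norm_eq_absNorm_mul haJ, ← abs_mul,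
    ← map_mul, div_mul_cancel₀ _ (RingOfIntegers.coe_ne_zero_iff.mpr hβ)]

lemma absNorm_maxPowDividing_le_max_vadicAbs (hIJ : I ⊔ J = ⊤) (haI : a * I = span {α})
    (haJ : a * J = span {β}) (hα : α ≠ 0) (hβ : β ≠ 0) (v : HeightOneSpectrum (𝓞 K)) :
    (absNorm (v.maxPowDividing J) : ℝ) ≤ max (vadicAbs K v (α / β)) 1 := by
  obtain ⟨ha, hI⟩ := mul_ne_zero_iff.mp (haI ▸ span_singleton_eq_bot.not.mpr hα)
  obtain ⟨-, hJ⟩ := mul_ne_zero_iff.mp (haJ ▸ span_singleton_eq_bot.not.mpr hβ)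
  have hv : vadicAbs K v (α / β) = (absNorm v.asIdeal : ℝ) ^ ((v.count J : ℤ) - v.count I) := by
    rw [vadicAbs_div v hα hβ, ← haI, ← haJ, count_mul ha hI, count_mul ha hJ]
    push_cast
    congr 1
    ring
  rw [maxPowDividing_eq_pow_count, map_pow, Nat.cast_pow]
  rcases count_eq_zero_or_count_eq_zero_of_sup_eq_top hI hJ hIJ with hvI | hvJ
  · rw [hv, hvI, Nat.cast_zero, sub_zero, zpow_natCast]
    exact le_max_left _ _
  · rw [hvJ, pow_zero]
    exact le_max_right _ _

lemma absNorm_le_finprod_max_vadicAbs (hIJ : I ⊔ J = ⊤) (haI : a * I = span {α})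
    (haJ : a * J = span {β}) (hα : α ≠ 0) (hβ : β ≠ 0) :
    (absNorm J : ℝ) ≤ ∏ᶠ v : HeightOneSpectrum (𝓞 K), max (vadicAbs K v (α / β)) 1 := by
  have hJ : J ≠ 0 := right_ne_zero_of_mul (haJ ▸ span_singleton_eq_bot.not.mpr hβ)
  let N : Ideal (𝓞 K) →* ℝ := (Nat.castRingHom ℝ).toMonoidHom.comp absNorm.toMonoidHom
  calc (absNorm J : ℝ)
      = ∏ᶠ v : HeightOneSpectrum (𝓞 K), N (v.maxPowDividing J) := by
        conv_lhs => rw [← finprod_heightOneSpectrum_factorization hJ]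
        exact N.map_finprod_of_preimage_one (by simp [N]) _
    _ ≤ _ := finprod_le_finprod ((hasFiniteMulSupport hJ).fun_comp N.map_one)
        (fun _ ↦ Nat.cast_nonneg _) (hasFiniteMulSupport_max_vadicAbs _)
        (absNorm_maxPowDividing_le_max_vadicAbs hIJ haI haJ hα hβ)

theorem absNorm_denominator_le_relHeight (hIJ : I ⊔ J = ⊤) (haI : a * I = span {α})
    (haJ : a * J = span {β}) (hα : α ≠ 0) (hβ : β ≠ 0) :
    (absNorm J : ℝ) ≤ relHeight K ((α : K) / β) := by
  have hfin := absNorm_le_finprod_max_vadicAbs hIJ haI haJ hα hβ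
  exact hfin.trans (le_mul_of_one_le_left ((Nat.cast_nonneg _).trans hfin)
    (one_le_prod_max_infinitePlace _))

theorem absNorm_numerator_le_relHeight (hIJ : I ⊔ J = ⊤) (haI : a * I = span {α})
    (haJ : a * J = span {β}) (hα : α ≠ 0) (hβ : β ≠ 0) :
    (absNorm I : ℝ) ≤ relHeight K ((α : K) / β) := by
  have hI : (absNorm I : ℝ) = |Algebra.norm ℚ ((α : K) / β)| * absNorm J := by
    exact_mod_cast absNorm_eq_abs_norm_div_mul_absNorm haI haJ hβ
  rw [hI]
  exact mul_le_mul (abs_norm_le_prod_max_infinitePlace _)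
    (absNorm_le_finprod_max_vadicAbs hIJ haI haJ hα hβ) (Nat.cast_nonneg _)
    (zero_le_one.trans (one_le_prod_max_infinitePlace _))

theorem norm_bounds_of_height_le_general (B : ℝ) (γ : K) (hγ : γ ≠ 0) (hB : relHeight K γ ≤ B)
    (I J : Ideal (𝓞 K)) (hIJ : I ⊔ J = ⊤)
    (a : Ideal (𝓞 K)) (α β : 𝓞 K)
    (haI : a * I = Ideal.span {α}) (haJ : a * J = Ideal.span {β})
    (hγαβ : γ = (α : K) / (β : K)) :
    |Algebra.norm ℚ (α : K)| ≤ B * (Ideal.absNorm a : ℝ) ∧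
    |Algebra.norm ℚ (β : K)| ≤ B * (Ideal.absNorm a : ℝ) ∧
    Ideal.span {α, β} = a := by
  subst hγαβ
  obtain ⟨hα, hβ⟩ := div_ne_zero_iff.mp hγ
  rw [RingOfIntegers.coe_ne_zero_iff] at hα hβ
  have hI := (absNorm_numerator_le_relHeight hIJ haI haJ hα hβ).trans hB
  have hJ := (absNorm_denominator_le_relHeight hIJ haI haJ hα hβ).trans hB
  have hNa : (0 : ℝ) ≤ absNorm a := Nat.cast_nonneg _
  refine ⟨?_, ?_, span_pair_eq_of_mul_eq_span hIJ haI haJ⟩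
  · rw [abs_norm_eq_absNorm_mul haI, mul_comm]
    push_cast
    exact mul_le_mul_of_nonneg_right hI hNa
  · rw [abs_norm_eq_absNorm_mul haJ, mul_comm]
    push_cast
    exact mul_le_mul_of_nonneg_right hJ hNa

theorem norm_bounds_of_height_le (B : ℝ) (γ : K) (hγ : γ ≠ 0) (hB : relHeight K γ ≤ B)
    (I J : Ideal (𝓞 K)) (hIJ : I ⊔ J = ⊤)
    (hfrac : FractionalIdeal.spanSingleton (𝓞 K)⁰ γ =
      (I : FractionalIdeal (𝓞 K)⁰ K) * (J : FractionalIdeal (𝓞 K)⁰ K)⁻¹)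
    (a : Ideal (𝓞 K)) (α β : 𝓞 K)
    (haI : a * I = Ideal.span {α}) (haJ : a * J = Ideal.span {β})
    (hγαβ : γ = (α : K) / (β : K)) :
    |Algebra.norm ℚ (α : K)| ≤ B * (Ideal.absNorm a : ℝ) ∧
    |Algebra.norm ℚ (β : K)| ≤ B * (Ideal.absNorm a : ℝ) ∧
    Ideal.span {α, β} = a :=
  norm_bounds_of_height_le_general B γ hγ hB I J hIJ a α β haI haJ hγαβ
end

section
/- Let K be a number field with unit rank r ≥ 1, fundamental units ε_1,…,ε_r, and let Λ': O_K^× → R^r be the logarithmic embedding (deleting the last archimedean coordinate). Let T be the inverse of the r×r matrix S whose columns are Λ'(ε_j). If u ∈ O_K^× satisfies H_K(u) ≤ D, then there exist an integer point (n_1,…,n_r) in the polytope T([-log D, log D]^r) and a root of unity ζ ∈ μ_K such that u = ζ ε_1^{n_1} ⋯ ε_r^{n_r}. -/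
open NumberField IsDedekindDomain Real
open scoped nonZeroDivisors Classical

variable (K : Type*) [Field K] [NumberField K]

/-!
A unit `u` has `|u|_v = 1` at every finite place, so `H_K(u) = ∏_w max (|u|_w^{n_w}, 1)`, and
by the product formula `∏_w |u|_w^{n_w} = 1`. For positive reals `a_w` with product `1` one has
`∏ max (a_w, 1) = ∏ max (a_w⁻¹, 1)`, so both `a_w` and `a_w⁻¹` are bounded by `H_K(u) ≤ D`:
every coordinate of `Λ'(u)` lies in `[-log D, log D]`. Writing `u = ζ ∏ ε_j ^ n_j` gives
`Λ'(u) = S n`, i.e. `n = T Λ'(u)`.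
-/

namespace Finset

variable {ι : Type*} {s : Finset ι} {i : ι}

lemma inv_le_prod_max_one {a : ι → ℝ} (ha : ∀ j ∈ s, 0 < a j) (hprod : ∏ j ∈ s, a j = 1)
    (hi : i ∈ s) : (a i)⁻¹ ≤ ∏ j ∈ s, max (a j) 1 :=
  calc (a i)⁻¹ ≤ ∏ j ∈ s, max (a j)⁻¹ 1 := le_prod_max_one hi fun j ↦ (a j)⁻¹
    _ = ∏ j ∈ s, a j * max (a j)⁻¹ 1 := by rw [prod_mul_distrib, hprod, one_mul]
    _ = ∏ j ∈ s, max (a j) 1 := prod_congr rfl fun j hj ↦ by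
        rw [mul_max_of_nonneg _ _ (ha j hj).le, mul_inv_cancel₀ (ha j hj).ne', mul_one, max_comm]

lemma abs_log_le_log_of_prod_max_one_le {a : ι → ℝ} {D : ℝ} (ha : ∀ j ∈ s, 0 < a j)
    (hprod : ∏ j ∈ s, a j = 1) (hD : ∏ j ∈ s, max (a j) 1 ≤ D) (hi : i ∈ s) :
    |Real.log (a i)| ≤ Real.log D := by
  have hai := ha i hi
  refine abs_le.2 ⟨?_, log_le_log hai ((le_prod_max_one hi a).trans hD)⟩
  rw [neg_le, ← Real.log_inv]
  exact log_le_log (inv_pos.2 hai) ((inv_le_prod_max_one ha hprod hi).trans hD)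

end Finset

section Units

open NumberField.Units NumberField.Units.dirichletUnitTheorem
open scoped Matrix WithZero

lemma vadicAbs_algebraMap_unit (v : HeightOneSpectrum (𝓞 K)) (u : (𝓞 K)ˣ) :
    vadicAbs K v (algebraMap (𝓞 K) K u) = 1 := by
  have hv : v.valuation K (algebraMap (𝓞 K) K u) = ((1 : Multiplicative ℤ) : ℤᵐ⁰) := by
    rw [← v.valuation_of_unit_eq (K := K) u, HeightOneSpectrum.valuationOfNeZero_eq]
    rfl
  simp only [vadicAbs, hv, WithZero.coe_ne_zero, dite_false, WithZero.unzero_coe, toAdd_one,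
    zpow_zero]

lemma relHeight_algebraMap_unit (u : (𝓞 K)ˣ) :
    relHeight K (algebraMap (𝓞 K) K u) = ∏ w : InfinitePlace K, max (w u ^ w.mult) 1 := by
  rw [relHeight, finprod_eq_one_of_forall_eq_one fun v ↦ by
    rw [vadicAbs_algebraMap_unit, max_self], mul_one]

lemma prod_infinitePlace_pow_mult_unit (u : (𝓞 K)ˣ) :
    ∏ w : InfinitePlace K, w u ^ w.mult = 1 := by
  rw [InfinitePlace.prod_eq_abs_norm, Units.norm, Rat.cast_one]

variable {K} in
lemma abs_logEmbedding_le_log_of_relHeight_le {u : (𝓞 K)ˣ} {D : ℝ}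
    (hu : relHeight K (algebraMap (𝓞 K) K u) ≤ D) (i : {w : InfinitePlace K // w ≠ w₀}) :
    |logEmbedding K (Additive.ofMul u) i| ≤ Real.log D := by
  rw [logEmbedding_component, ← Real.log_pow]
  exact Finset.abs_log_le_log_of_prod_max_one_le (a := fun w ↦ w (u : K) ^ w.mult)
    (fun w _ ↦ pow_pos (pos_at_place u w) _) (prod_infinitePlace_pow_mult_unit K u)
    (relHeight_algebraMap_unit K u ▸ hu) (Finset.mem_univ _)

variable {K} in
lemma logEmbedding_torsion_mul_prod_zpow {ι : Type*} [Fintype ι] {ζ : (𝓞 K)ˣ}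
    (hζ : ζ ∈ torsion K) (ε : ι → (𝓞 K)ˣ) (m : ι → ℤ) :
    logEmbedding K (Additive.ofMul (ζ * ∏ j, ε j ^ m j)) =
      Matrix.of (fun i j ↦ logEmbedding K (Additive.ofMul (ε j)) i) *ᵥ fun j ↦ (m j : ℝ) := by
  rw [ofMul_mul, map_add, logEmbedding_eq_zero_iff.2 hζ, zero_add, ofMul_prod, map_sum]
  ext i
  simp [Matrix.mulVec, dotProduct, ofMul_zpow, mul_comm _ (m _ : ℝ)]

end Units

open NumberField.Units NumberField.Units.dirichletUnitTheorem in
theorem unit_of_bounded_height_in_polytope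
    (ε : {w : InfinitePlace K // w ≠ (w₀ : InfinitePlace K)} → (𝓞 K)ˣ)
    (hfund : ∀ u : (𝓞 K)ˣ, ∃ ζ : (𝓞 K)ˣ,
      ∃ m : {w : InfinitePlace K // w ≠ (w₀ : InfinitePlace K)} → ℤ,
      ζ ∈ torsion K ∧ u = ζ * ∏ i, ε i ^ m i)
    (S : Matrix {w : InfinitePlace K // w ≠ (w₀ : InfinitePlace K)}
      {w : InfinitePlace K // w ≠ (w₀ : InfinitePlace K)} ℝ)
    (hS : ∀ i j, S i j = logEmbedding K (Additive.ofMul (ε j)) i)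
    (hSdet : IsUnit S.det)
    (D : ℝ) (u : (𝓞 K)ˣ)
    (hu : relHeight K (algebraMap (𝓞 K) K u) ≤ D) :
    ∃ n : {w : InfinitePlace K // w ≠ (w₀ : InfinitePlace K)} → ℤ,
      ∃ ζ : (𝓞 K)ˣ, ζ ∈ torsion K ∧ u = ζ * ∏ i, ε i ^ n i ∧
        ∃ y : {w : InfinitePlace K // w ≠ (w₀ : InfinitePlace K)} → ℝ,
          (∀ i, |y i| ≤ Real.log D) ∧ (fun i => (n i : ℝ)) = S⁻¹.mulVec y := by
  obtain ⟨ζ, m, hζ, hdecomp⟩ := hfund u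
  have hS' : S = Matrix.of fun i j ↦ logEmbedding K (Additive.ofMul (ε j)) i := Matrix.ext hS
  have hlog : logEmbedding K (Additive.ofMul u) = S.mulVec fun j ↦ (m j : ℝ) := by
    rw [hdecomp, logEmbedding_torsion_mul_prod_zpow hζ, hS']
  refine ⟨m, ζ, hζ, hdecomp, S.mulVec fun j ↦ (m j : ℝ),
    fun i ↦ hlog ▸ abs_logEmbedding_le_log_of_relHeight_le hu i, ?_⟩
  rw [Matrix.mulVec_mulVec, Matrix.nonsing_inv_mul S hSdet, Matrix.one_mulVec]
end

section
/- Let K be a number field with unit rank r ≥ 1, fundamental units ε_1,…,ε_r, and let T be the inverse of the matrix S with columns Λ'(ε_j). If a unit u = ζ ε_1^{n_1} ⋯ ε_r^{n_r} (ζ ∈ μ_K, n_i ∈ Z) satisfies H_K(u) ≤ D for some D ≥ 1, then max_{1≤i≤r} |n_i| ≤ ⌊‖T‖ · √r · log D⌋, where ‖T‖ is the operator norm of T. -/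
open NumberField IsDedekindDomain Real
open scoped nonZeroDivisors Classical

variable (K : Type*) [Field K] [NumberField K]

/-!
The exponent vector `n` is recovered from the logarithmic embedding of `u` as `n = T Λ'(u)`, so
`|n_i| ≤ ‖T‖ · |Λ'(u)|`. Each coordinate of `Λ'(u)` is `log |u|_w^{n_w}`, and since the archimedean
absolute values of a unit multiply to `1`, both `|u|_w^{n_w}` and its inverse are sub-products of
`∏_w |u|_w^{n_w}`, hence bounded by `∏_w max {|u|_w^{n_w}, 1} ≤ H_K(u) ≤ D`. Thus every coordinate
of `Λ'(u)` is at most `log D` in absolute value and `|Λ'(u)| ≤ √r · log D`.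
-/

open NumberField.Units NumberField.Units.dirichletUnitTheorem
open scoped Matrix

section Elementary

variable {ι : Type*} [Fintype ι]

theorem Finset.prod_le_prod_max_one {a : ι → ℝ} (ha : ∀ j, 0 ≤ a j) (s : Finset ι) :
    ∏ j ∈ s, a j ≤ ∏ j, max (a j) 1 :=
  calc ∏ j ∈ s, a j ≤ ∏ j ∈ s, max (a j) 1 :=
        Finset.prod_le_prod (fun j _ => ha j) fun _ _ => le_max_left _ _
    _ ≤ ∏ j, max (a j) 1 :=
        Finset.prod_le_prod_of_subset_of_one_le (Finset.subset_univ s)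
          (fun j _ => (ha j).trans (le_max_left _ _)) fun _ _ _ => le_max_right _ _

theorem abs_log_le_log_prod_max_one {a : ι → ℝ} (ha : ∀ j, 0 < a j) (h : ∏ j, a j = 1)
    (i : ι) : |Real.log (a i)| ≤ Real.log (∏ j, max (a j) 1) := by
  classical
  have ha' : ∀ j, 0 ≤ a j := fun j => (ha j).le
  have hinv : (a i)⁻¹ = ∏ j ∈ Finset.univ.erase i, a j := by
    rw [← Finset.mul_prod_erase _ _ (Finset.mem_univ i)] at h
    exact inv_eq_of_mul_eq_one_right h
  rw [abs_le, neg_le, ← Real.log_inv]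
  constructor
  · refine Real.log_le_log (inv_pos.2 (ha i)) ?_
    rw [hinv]
    exact Finset.prod_le_prod_max_one ha' _
  · refine Real.log_le_log (ha i) ?_
    simpa using Finset.prod_le_prod_max_one ha' {i}

theorem EuclideanSpace.norm_le_sqrt_card_mul {y : EuclideanSpace ℝ ι} {c : ℝ} (hc : 0 ≤ c)
    (hy : ∀ j, |y j| ≤ c) : ‖y‖ ≤ √(Fintype.card ι) * c := by
  rw [EuclideanSpace.norm_eq, ← Real.sqrt_sq hc, ← Real.sqrt_mul (Nat.cast_nonneg _)]
  refine Real.sqrt_le_sqrt ?_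
  calc ∑ j, ‖y j‖ ^ 2 ≤ ∑ _j : ι, c ^ 2 :=
        Finset.sum_le_sum fun j _ => pow_le_pow_left₀ (norm_nonneg _) (hy j) 2
    _ = Fintype.card ι * c ^ 2 := by simp

theorem Matrix.abs_apply_le_opNorm_inv_mul_norm_mulVec [DecidableEq ι] {S : Matrix ι ι ℝ}
    (hS : IsUnit S.det) (v : ι → ℝ) (i : ι) :
    |v i| ≤ ‖Matrix.toEuclideanCLM (𝕜 := ℝ) S⁻¹‖ * ‖WithLp.toLp 2 (S *ᵥ v)‖ := by
  have hv : Matrix.toEuclideanCLM (𝕜 := ℝ) S⁻¹ (WithLp.toLp 2 (S *ᵥ v)) = WithLp.toLp 2 v := by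
    rw [Matrix.toEuclideanCLM_toLp, Matrix.mulVec_mulVec, Matrix.nonsing_inv_mul S hS,
      Matrix.one_mulVec]
  calc |v i| = ‖(WithLp.toLp 2 v : EuclideanSpace ℝ ι) i‖ := rfl
    _ ≤ ‖(WithLp.toLp 2 v : EuclideanSpace ℝ ι)‖ := PiLp.norm_apply_le _ i
    _ ≤ _ := hv ▸ ContinuousLinearMap.le_opNorm _ _

end Elementary

theorem prod_max_one_le_relHeight (x : K) :
    ∏ w : InfinitePlace K, max (w x ^ w.mult) 1 ≤ relHeight K x :=
  le_mul_of_one_le_right (Finset.prod_nonneg fun _ _ => zero_le_one.trans (le_max_right _ _))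
    (one_le_finprod fun _ => le_max_right _ _)

theorem one_le_relHeight (x : K) : 1 ≤ relHeight K x :=
  (Finset.one_le_prod fun _ _ => le_max_right _ _).trans (prod_max_one_le_relHeight K x)

theorem NumberField.Units.prod_pow_mult_eq_one (u : (𝓞 K)ˣ) :
    ∏ w : InfinitePlace K, w (u : K) ^ w.mult = 1 := by
  rw [InfinitePlace.prod_eq_abs_norm, Units.norm, Rat.cast_one]

theorem abs_logEmbedding_le_log_relHeight (u : (𝓞 K)ˣ) (w : {w : InfinitePlace K // w ≠ w₀}) :
    |logEmbedding K (Additive.ofMul u) w| ≤ Real.log (relHeight K (algebraMap (𝓞 K) K u)) := by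
  have hpos : ∀ v : InfinitePlace K, 0 < v (u : K) ^ v.mult :=
    fun v => pow_pos (InfinitePlace.pos_iff.2 (coe_ne_zero u)) _
  rw [logEmbedding_component, ← Real.log_pow]
  refine (abs_log_le_log_prod_max_one hpos (prod_pow_mult_eq_one K u) w.val).trans ?_
  exact Real.log_le_log (Finset.prod_pos fun _ _ => lt_max_of_lt_right one_pos)
    (prod_max_one_le_relHeight K _)

theorem logEmbedding_mul_prod_zpow {ι : Type*} [Fintype ι] (ε : ι → (𝓞 K)ˣ)
    {S : Matrix {w : InfinitePlace K // w ≠ w₀} ι ℝ}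
    (hS : ∀ i j, S i j = logEmbedding K (Additive.ofMul (ε j)) i)
    {ζ : (𝓞 K)ˣ} (hζ : ζ ∈ torsion K) (n : ι → ℤ) :
    logEmbedding K (Additive.ofMul (ζ * ∏ j, ε j ^ n j)) = S *ᵥ fun j => (n j : ℝ) := by
  rw [ofMul_mul, map_add, logEmbedding_eq_zero_iff.2 hζ, zero_add, ofMul_prod, map_sum]
  ext k
  simp [Matrix.mulVec, dotProduct, hS, ofMul_zpow, mul_comm]

theorem NumberField.Units.card_infinitePlace_ne_w₀ :
    Fintype.card {w : InfinitePlace K // w ≠ w₀} = rank K := by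
  rw [← Units.finrank_eq_rank, Module.finrank_fintype_fun_eq_card]

open NumberField.Units NumberField.Units.dirichletUnitTheorem in
theorem unit_exponents_le_floor
    (ε : {w : InfinitePlace K // w ≠ (w₀ : InfinitePlace K)} → (𝓞 K)ˣ)
    (S : Matrix {w : InfinitePlace K // w ≠ (w₀ : InfinitePlace K)}
      {w : InfinitePlace K // w ≠ (w₀ : InfinitePlace K)} ℝ)
    (hS : ∀ i j, S i j = logEmbedding K (Additive.ofMul (ε j)) i)
    (hSdet : IsUnit S.det)
    (D : ℝ)
    (ζ : (𝓞 K)ˣ) (hζ : ζ ∈ torsion K)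
    (n : {w : InfinitePlace K // w ≠ (w₀ : InfinitePlace K)} → ℤ)
    (u : (𝓞 K)ˣ) (hu : u = ζ * ∏ i, ε i ^ n i)
    (hH : relHeight K (algebraMap (𝓞 K) K u) ≤ D) :
    ∀ i, |n i| ≤ ⌊‖Matrix.toEuclideanCLM (𝕜 := ℝ) S⁻¹‖ *
      Real.sqrt (rank K) * Real.log D⌋ := by
  intro i
  have hΛ : logEmbedding K (Additive.ofMul u) = S *ᵥ fun j => (n j : ℝ) :=
    hu ▸ logEmbedding_mul_prod_zpow K ε hS hζ n
  have hH1 : 1 ≤ relHeight K (algebraMap (𝓞 K) K u) := one_le_relHeight K _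
  have hlog : Real.log (relHeight K (algebraMap (𝓞 K) K u)) ≤ Real.log D :=
    Real.log_le_log (zero_lt_one.trans_le hH1) hH
  have hΛnorm : ‖WithLp.toLp 2 (logEmbedding K (Additive.ofMul u))‖ ≤ √(rank K) * Real.log D := by
    rw [← card_infinitePlace_ne_w₀ K]
    exact EuclideanSpace.norm_le_sqrt_card_mul ((Real.log_nonneg hH1).trans hlog)
      fun j => (abs_logEmbedding_le_log_relHeight K u j).trans hlog
  rw [Int.le_floor, mul_assoc, Int.cast_abs]
  calc |(n i : ℝ)| ≤ ‖Matrix.toEuclideanCLM (𝕜 := ℝ) S⁻¹‖ * ‖WithLp.toLp 2 (S *ᵥ _)‖ :=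
        Matrix.abs_apply_le_opNorm_inv_mul_norm_mulVec hSdet (fun j => (n j : ℝ)) i
    _ ≤ _ := by rw [← hΛ]; gcongr
end

section
/- Let S be an invertible r×r real matrix, d > 0, η > 0, and set B = [−d,d]^r and B̃ = [−d−η, d+η]^r. Let m ≥ r² · max{‖S‖_sup, ‖S^{-1}‖_sup}, λ = η/(d r (1+m)), and δ = min{ λ/(r²(m² + mλ)), 1/r² }. If S̃ is any r×r matrix with ‖S̃ − S‖_sup < δ, then S̃ is invertible and S^{-1}(B) ⊆ S̃^{-1}(B̃). -/
open scoped Classical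

/-- The Euclidean operator norm `‖L‖ = sup_{|x| ≤ 1} |Lx|` of a real `r × r` matrix. -/
noncomputable def opNorm {r : ℕ} (M : Matrix (Fin r) (Fin r) ℝ) : ℝ :=
  ‖Matrix.toEuclideanCLM (𝕜 := ℝ) M‖

/-- The sup norm `max_{i,j} |L_{i,j}|` of a real `r × r` matrix. -/
noncomputable def supNorm {r : ℕ} (M : Matrix (Fin r) (Fin r) ℝ) : ℝ :=
  ⨆ i, ⨆ j, |M i j|

/-!
Measure vectors by the sup norm `‖x‖ = maxᵢ |xᵢ|` of `Fin r → ℝ`; a matrix `M` then satisfies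
`‖M x‖ ≤ r ‖M‖_sup ‖x‖`. Writing `x = S⁻¹ (S x)` gives `‖x‖ ≤ r ‖S⁻¹‖_sup ‖S x‖`, hence
`‖(S̃ - S) x‖ ≤ c ‖S x‖` with `c = r² ‖S⁻¹‖_sup ‖S̃ - S‖_sup < m δ`. Since `m ≥ 1` (because
`1 = (S S⁻¹)ᵢᵢ ≤ r ‖S‖_sup ‖S⁻¹‖_sup`), the choice of `δ` makes `m δ ≤ 1` and `m δ d ≤ η`, so
`c < 1` and `c d ≤ η`. The first forces `S̃ x = 0 → S x = 0`, i.e. `S̃` is invertible; the second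
gives `‖S̃ x‖ ≤ ‖S x‖ + c ‖S x‖ ≤ d + η`.
-/

open Matrix

section SupNorm

variable {r : ℕ}

lemma abs_le_supNorm (M : Matrix (Fin r) (Fin r) ℝ) (i j : Fin r) : |M i j| ≤ supNorm M :=
  (le_ciSup (f := fun j => |M i j|) (Set.finite_range _).bddAbove j).trans
    (le_ciSup (f := fun i => ⨆ j, |M i j|) (Set.finite_range _).bddAbove i)

lemma supNorm_nonneg (M : Matrix (Fin r) (Fin r) ℝ) : 0 ≤ supNorm M :=
  Real.iSup_nonneg fun _ => Real.iSup_nonneg fun _ => abs_nonneg _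

lemma norm_col_le_supNorm (M : Matrix (Fin r) (Fin r) ℝ) (j : Fin r) :
    ‖fun i => M i j‖ ≤ supNorm M :=
  (pi_norm_le_iff_of_nonneg (supNorm_nonneg M)).2 fun i => abs_le_supNorm M i j

lemma norm_mulVec_le (M : Matrix (Fin r) (Fin r) ℝ) (x : Fin r → ℝ) :
    ‖M *ᵥ x‖ ≤ r * supNorm M * ‖x‖ := by
  have := supNorm_nonneg M
  refine (pi_norm_le_iff_of_nonneg (by positivity)).2 fun i => ?_
  calc ‖(M *ᵥ x) i‖ = ‖∑ j, M i j * x j‖ := rfl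
    _ ≤ ∑ j, ‖M i j‖ * ‖x j‖ := norm_sum_le_of_le _ fun j _ => norm_mul_le _ _
    _ ≤ ∑ _j : Fin r, supNorm M * ‖x‖ := Finset.sum_le_sum fun j _ =>
        mul_le_mul (abs_le_supNorm M i j) (norm_le_pi_norm x j) (norm_nonneg _) this
    _ = r * supNorm M * ‖x‖ := by simp [mul_assoc]

lemma abs_mul_apply_le (A B : Matrix (Fin r) (Fin r) ℝ) (i j : Fin r) :
    |(A * B) i j| ≤ r * supNorm A * supNorm B := by
  have hA := supNorm_nonneg A
  calc |(A * B) i j| = ‖(A *ᵥ fun k => B k j) i‖ := rfl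
    _ ≤ r * supNorm A * ‖fun k => B k j‖ := (norm_le_pi_norm _ i).trans (norm_mulVec_le A _)
    _ ≤ r * supNorm A * supNorm B := by gcongr; exact norm_col_le_supNorm B j

variable {S : Matrix (Fin r) (Fin r) ℝ}

lemma one_le_mul_supNorm_mul_supNorm_inv (hS : IsUnit S.det) (hr : 0 < r) :
    1 ≤ r * supNorm S * supNorm S⁻¹ := by
  let i : Fin r := ⟨0, hr⟩
  simpa [mul_nonsing_inv S hS] using abs_mul_apply_le S S⁻¹ i i

lemma one_le_sq_mul_max_supNorm (hS : IsUnit S.det) (hr : 0 < r) :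
    1 ≤ (r : ℝ) ^ 2 * max (supNorm S) (supNorm S⁻¹) := by
  have hprod := one_le_mul_supNorm_mul_supNorm_inv hS hr
  have hr1 : (1 : ℝ) ≤ r := by exact_mod_cast hr
  set M := max (supNorm S) (supNorm S⁻¹)
  have hM : 0 ≤ M := (supNorm_nonneg S).trans (le_max_left _ _)
  have hmax : supNorm S * supNorm S⁻¹ ≤ M ^ 2 := by
    rw [sq]
    exact mul_le_mul (le_max_left _ _) (le_max_right _ _) (supNorm_nonneg _) hM
  have hsq : 1 ≤ ((r : ℝ) ^ 2 * M) ^ 2 :=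
    calc (1 : ℝ) ≤ r ^ 3 * (r * supNorm S * supNorm S⁻¹) := by
          nlinarith [one_le_pow₀ (n := 3) hr1]
      _ ≤ r ^ 3 * (r * M ^ 2) := by rw [mul_assoc]; gcongr
      _ = ((r : ℝ) ^ 2 * M) ^ 2 := by ring
  exact (one_le_sq_iff₀ (by positivity)).1 hsq

lemma norm_le_mul_norm_mulVec (hS : IsUnit S.det) (x : Fin r → ℝ) :
    ‖x‖ ≤ r * supNorm S⁻¹ * ‖S *ᵥ x‖ := by
  simpa [mulVec_mulVec, nonsing_inv_mul S hS] using norm_mulVec_le S⁻¹ (S *ᵥ x)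

lemma norm_sub_mulVec_le (hS : IsUnit S.det) (T : Matrix (Fin r) (Fin r) ℝ) (x : Fin r → ℝ) :
    ‖(T - S) *ᵥ x‖ ≤ r ^ 2 * supNorm S⁻¹ * supNorm (T - S) * ‖S *ᵥ x‖ := by
  have := supNorm_nonneg (T - S)
  calc ‖(T - S) *ᵥ x‖ ≤ r * supNorm (T - S) * ‖x‖ := norm_mulVec_le _ _
    _ ≤ r * supNorm (T - S) * (r * supNorm S⁻¹ * ‖S *ᵥ x‖) := by
        gcongr; exact norm_le_mul_norm_mulVec hS x
    _ = r ^ 2 * supNorm S⁻¹ * supNorm (T - S) * ‖S *ᵥ x‖ := by ring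

lemma norm_mulVec_le_one_add_mul (hS : IsUnit S.det) (T : Matrix (Fin r) (Fin r) ℝ)
    (x : Fin r → ℝ) :
    ‖T *ᵥ x‖ ≤ (1 + r ^ 2 * supNorm S⁻¹ * supNorm (T - S)) * ‖S *ᵥ x‖ := by
  have hsplit : T *ᵥ x = S *ᵥ x + (T - S) *ᵥ x := by rw [sub_mulVec]; abel
  rw [hsplit]
  linarith [norm_add_le (S *ᵥ x) ((T - S) *ᵥ x), norm_sub_mulVec_le hS T x]

lemma isUnit_det_of_supNorm_sub_lt (hS : IsUnit S.det) (T : Matrix (Fin r) (Fin r) ℝ)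
    (hT : r ^ 2 * supNorm S⁻¹ * supNorm (T - S) < 1) : IsUnit T.det := by
  rw [isUnit_iff_ne_zero, Ne, ← exists_mulVec_eq_zero_iff]
  rintro ⟨x, hx0, hTx⟩
  have hle := norm_sub_mulVec_le hS T x
  rw [sub_mulVec, hTx, zero_sub, norm_neg] at hle
  have hSx : S *ᵥ x = 0 := norm_le_zero_iff.1 (by nlinarith [norm_nonneg (S *ᵥ x)])
  exact hx0 (by simpa [mulVec_mulVec, nonsing_inv_mul S hS] using congrArg (S⁻¹ *ᵥ ·) hSx)

end SupNorm

lemma mul_le_one_and_mul_mul_le_of_le_budget {r m d η lam δ : ℝ} (hr : 1 ≤ r) (hm : 1 ≤ m)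
    (hd : 0 < d) (hη : 0 < η) (hlam : lam = η / (d * r * (1 + m)))
    (hδ : δ ≤ lam / (r ^ 2 * (m ^ 2 + m * lam))) :
    m * δ ≤ 1 ∧ m * δ * d ≤ η := by
  have hlam_pos : 0 < lam := by rw [hlam]; positivity
  have hr2 : 1 ≤ r ^ 2 := one_le_pow₀ hr
  have hden : lam ≤ r ^ 2 * (m + lam) := by nlinarith
  have hmδ : m * δ ≤ lam / (r ^ 2 * (m + lam)) :=
    calc m * δ ≤ m * (lam / (r ^ 2 * (m ^ 2 + m * lam))) := by gcongr
      _ = lam / (r ^ 2 * (m + lam)) := by field_simp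
  have hdlam : d * lam ≤ η := by
    have : d * lam * (r * (1 + m)) = η := by rw [hlam]; field_simp
    have hr1m : 1 ≤ r * (1 + m) := by nlinarith
    nlinarith [mul_le_mul_of_nonneg_left hr1m (mul_pos hd hlam_pos).le]
  constructor
  · exact hmδ.trans ((div_le_one (by positivity)).2 hden)
  · calc m * δ * d ≤ lam / (r ^ 2 * (m + lam)) * d := by gcongr
      _ ≤ lam * d := by gcongr; exact div_le_self hlam_pos.le (by nlinarith)
      _ ≤ η := by linarith

theorem box_preimage_subset {r : ℕ} (S St : Matrix (Fin r) (Fin r) ℝ)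
    (hS : IsUnit S.det) (d η : ℝ) (hd : 0 < d) (hη : 0 < η)
    (m : ℝ) (hm : (r : ℝ) ^ 2 * max (supNorm S) (supNorm S⁻¹) ≤ m)
    (lam δ : ℝ) (hlam : lam = η / (d * r * (1 + m)))
    (hδ : δ = min (lam / ((r : ℝ) ^ 2 * (m ^ 2 + m * lam))) (1 / (r : ℝ) ^ 2))
    (h : supNorm (St - S) < δ) :
    IsUnit St.det ∧
      ∀ x : Fin r → ℝ, (∀ i, |S.mulVec x i| ≤ d) → ∀ i, |St.mulVec x i| ≤ d + η := by
  set ε := supNorm (St - S)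
  have hε := supNorm_nonneg (St - S)
  -- `1 / 0 = 0`, so the second term of the minimum rules out `r = 0`
  have hr : 0 < r := by
    refine Nat.pos_of_ne_zero fun hr0 => ?_
    have : δ ≤ 0 := by simpa [hr0] using hδ.trans_le (min_le_right _ _)
    linarith
  have hm1 : 1 ≤ m := (one_le_sq_mul_max_supNorm hS hr).trans hm
  have hsI : (r : ℝ) ^ 2 * supNorm S⁻¹ ≤ m := le_trans (by gcongr; exact le_max_right _ _) hm
  obtain ⟨hmδ, hmδd⟩ := mul_le_one_and_mul_mul_le_of_le_budget (by exact_mod_cast hr) hm1 hd hη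
    hlam (hδ.trans_le (min_le_left _ _))
  have hc : (r : ℝ) ^ 2 * supNorm S⁻¹ * ε < m * δ :=
    calc (r : ℝ) ^ 2 * supNorm S⁻¹ * ε ≤ m * ε := by gcongr
      _ < m * δ := by gcongr
  have hδ0 : 0 < δ := hε.trans_lt h
  refine ⟨isUnit_det_of_supNorm_sub_lt hS St (hc.trans_le hmδ), fun x hx i => ?_⟩
  have hSx : ‖S *ᵥ x‖ ≤ d := (pi_norm_le_iff_of_nonneg hd.le).2 hx
  calc |(St *ᵥ x) i| ≤ ‖St *ᵥ x‖ := norm_le_pi_norm (St *ᵥ x) i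
    _ ≤ (1 + r ^ 2 * supNorm S⁻¹ * ε) * ‖S *ᵥ x‖ := norm_mulVec_le_one_add_mul hS St x
    _ ≤ (1 + m * δ) * d := by gcongr
    _ ≤ d + η := by linarith
end
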